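/- Valid co-rank stays within tightened bounds: suppose j is a valid co-rank vector (Σ j_t = K, max ℓ(j) ≤ min r(j)) and i is a vector with Σ i_t = K that violates co-ranking with donor p, receiver q (L_p[i_p−1] > L_q[i_q]), where all values are distinct. Then j_p ≤ i_p − 1 < i_p and j_q ≥ i_q + 1 > i_q; hence setting U_b[p] ← i_p and L_b[q] ← i_q keeps j within the bounds. -/

import Mathlib

open scoped BigOperators Classical

/-- Left boundary value `ℓ_t` of the cut: `L_t[i_t - 1]` if `i_t > 0`, else `⊥` (−∞). -/
noncomputable def lcut {m : ℕ} (n : Fin m → ℕ) (L : ∀ t, Fin (n t) → ℝ)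
    (i : Fin m → ℕ) (t : Fin m) : EReal :=
  if h : 0 < i t ∧ i t ≤ n t then ((L t ⟨i t - 1, by omega⟩ : ℝ) : EReal) else ⊥

/-- Right boundary value `r_t` of the cut: `L_t[i_t]` if `i_t < n_t`, else `⊤` (+∞). -/
noncomputable def rcut {m : ℕ} (n : Fin m → ℕ) (L : ∀ t, Fin (n t) → ℝ)
    (i : Fin m → ℕ) (t : Fin m) : EReal :=
  if h : i t < n t then ((L t ⟨i t, h⟩ : ℝ) : EReal) else ⊤

/-
A valid co-rank `j` cannot dominate `i` at the donor `p`: otherwise, at any `t` with `j t < i t`,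
the cut inequalities of `j`, together with monotonicity of `L t` and `L p`, force
`ℓ(i)_t = ℓ(i)_p`, two equal values from different sequences. Hence `j ≥ i` everywhere, so
`j = i` as both sum to `K`, which is impossible since `i` violates the co-ranking at `(p, q)`.
Symmetrically at the receiver `q`.
-/

section Cuts

variable {m : ℕ} {n : Fin m → ℕ} {L : ∀ t, Fin (n t) → ℝ} {i j : Fin m → ℕ}

theorem lcut_of_pos {t : Fin m} (h0 : 0 < i t) (hle : i t ≤ n t) :
    lcut n L i t = (L t ⟨i t - 1, by omega⟩ : EReal) :=
  dif_pos ⟨h0, hle⟩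

theorem rcut_of_lt {t : Fin m} (h : i t < n t) : rcut n L i t = (L t ⟨i t, h⟩ : EReal) :=
  dif_pos h

theorem lcut_mono (hmono : ∀ t, Monotone (L t)) {t : Fin m} (hij : i t ≤ j t)
    (hj : j t ≤ n t) : lcut n L i t ≤ lcut n L j t := by
  by_cases hi : 0 < i t
  · rw [lcut_of_pos hi (hij.trans hj), lcut_of_pos (hi.trans_le hij) hj, EReal.coe_le_coe_iff]
    exact hmono t (Fin.mk_le_mk.mpr (by omega))
  · simp [lcut, hi]

theorem rcut_mono (hmono : ∀ t, Monotone (L t)) {t : Fin m} (hij : i t ≤ j t) :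
    rcut n L i t ≤ rcut n L j t := by
  by_cases hj : j t < n t
  · rw [rcut_of_lt (hij.trans_lt hj), rcut_of_lt hj, EReal.coe_le_coe_iff]
    exact hmono t (Fin.mk_le_mk.mpr hij)
  · simp [rcut, hj]

theorem rcut_le_lcut_of_lt (hmono : ∀ t, Monotone (L t)) {t : Fin m} (hji : j t < i t)
    (hi : i t ≤ n t) : rcut n L j t ≤ lcut n L i t := by
  rw [rcut_of_lt (hji.trans_le hi), lcut_of_pos (by omega) hi, EReal.coe_le_coe_iff]
  exact hmono t (Fin.mk_le_mk.mpr (by omega))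

theorem eq_of_lcut_eq (hinj : Function.Injective (fun x : Σ t : Fin m, Fin (n t) => L x.1 x.2))
    {s t : Fin m} (hs0 : 0 < i s) (hs : i s ≤ n s) (ht0 : 0 < i t) (ht : i t ≤ n t)
    (h : lcut n L i s = lcut n L i t) : s = t := by
  rw [lcut_of_pos hs0 hs, lcut_of_pos ht0 ht, EReal.coe_eq_coe_iff] at h
  exact congrArg Sigma.fst (hinj (a₁ := ⟨s, _⟩) (a₂ := ⟨t, _⟩) h)

theorem eq_of_rcut_eq (hinj : Function.Injective (fun x : Σ t : Fin m, Fin (n t) => L x.1 x.2))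
    {s t : Fin m} (hs : i s < n s) (ht : i t < n t)
    (h : rcut n L i s = rcut n L i t) : s = t := by
  rw [rcut_of_lt hs, rcut_of_lt ht, EReal.coe_eq_coe_iff] at h
  exact congrArg Sigma.fst (hinj (a₁ := ⟨s, _⟩) (a₂ := ⟨t, _⟩) h)

theorem le_of_le_at_lcut_max (hmono : ∀ t, Monotone (L t))
    (hinj : Function.Injective (fun x : Σ t : Fin m, Fin (n t) => L x.1 x.2))
    (hile : ∀ t, i t ≤ n t) (hjle : ∀ t, j t ≤ n t)
    (hj : ∀ s t, lcut n L j s ≤ rcut n L j t) {p : Fin m}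
    (hpmax : ∀ t, lcut n L i t ≤ lcut n L i p) (hp : 0 < i p) (hpj : i p ≤ j p) (t : Fin m) :
    i t ≤ j t := by
  by_contra! hjt
  have heq : lcut n L i t = lcut n L i p := (hpmax t).antisymm <|
    calc lcut n L i p ≤ lcut n L j p := lcut_mono hmono hpj (hjle p)
      _ ≤ rcut n L j t := hj p t
      _ ≤ lcut n L i t := rcut_le_lcut_of_lt hmono hjt (hile t)
  have htp : t ≠ p := by rintro rfl; omega
  exact htp (eq_of_lcut_eq hinj (by omega) (hile t) hp (hile p) heq)

theorem le_of_le_at_rcut_min (hmono : ∀ t, Monotone (L t))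
    (hinj : Function.Injective (fun x : Σ t : Fin m, Fin (n t) => L x.1 x.2))
    (hjle : ∀ t, j t ≤ n t) (hj : ∀ s t, lcut n L j s ≤ rcut n L j t) {q : Fin m}
    (hqmin : ∀ t, rcut n L i q ≤ rcut n L i t) (hq : i q < n q) (hqj : j q ≤ i q) (t : Fin m) :
    j t ≤ i t := by
  by_contra! hit
  have heq : rcut n L i q = rcut n L i t := (hqmin t).antisymm <|
    calc rcut n L i t ≤ lcut n L j t := rcut_le_lcut_of_lt hmono hit (hjle t)
      _ ≤ rcut n L j q := hj t q
      _ ≤ rcut n L i q := rcut_mono hmono hqj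
  have htq : t ≠ q := by rintro rfl; omega
  exact htq (eq_of_rcut_eq hinj hq (hit.trans_le (hjle t)) heq).symm

end Cuts

theorem eq_of_le_of_sum_eq {ι M : Type*} [Fintype ι] [AddCommMonoid M] [PartialOrder M]
    [IsOrderedCancelAddMonoid M] {f g : ι → M} (hle : ∀ t, f t ≤ g t)
    (hsum : ∑ t, f t = ∑ t, g t) : f = g :=
  funext fun t => (Finset.sum_eq_sum_iff_of_le fun t _ => hle t).mp hsum t (Finset.mem_univ t)

/-- a valid co-rank vector `j` stays within the tightened bounds:
`j_p < i_p` and `j_q > i_q` for the violated donor/receiver pair of `i`. -/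
theorem valid_corank_within_tightened_bounds {m : ℕ} (n : Fin m → ℕ)
    (L : ∀ t, Fin (n t) → ℝ) (hmono : ∀ t, Monotone (L t))
    (hinj : Function.Injective (fun x : Σ t : Fin m, Fin (n t) => L x.1 x.2))
    (K : ℕ) (i j : Fin m → ℕ)
    (hile : ∀ t, i t ≤ n t) (hjle : ∀ t, j t ≤ n t)
    (hisum : ∑ t, i t = K) (hjsum : ∑ t, j t = K)
    (hjco : (⨆ t, lcut n L j t) ≤ ⨅ t, rcut n L j t)
    (p q : Fin m)
    (hpmax : ∀ t, lcut n L i t ≤ lcut n L i p)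
    (hqmin : ∀ t, rcut n L i q ≤ rcut n L i t)
    (hp : 0 < i p) (hq : i q < n q)
    (hviol : L q ⟨i q, hq⟩ < L p ⟨i p - 1, by have := hile p; omega⟩) :
    j p < i p ∧ i q < j q := by
  have hj : ∀ s t, lcut n L j s ≤ rcut n L j t := fun s t =>
    (le_iSup _ s).trans (hjco.trans (iInf_le _ t))
  have hsum : ∑ t, i t = ∑ t, j t := hisum.trans hjsum.symm
  have hviol' : rcut n L i q < lcut n L i p := by
    rw [rcut_of_lt hq, lcut_of_pos hp (hile p)]
    exact EReal.coe_lt_coe_iff.mpr hviol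
  have hne : i ≠ j := by
    rintro rfl
    exact (hj p q).not_gt hviol'
  refine ⟨lt_of_not_ge fun hpj => hne ?_, lt_of_not_ge fun hqj => hne ?_⟩
  · exact eq_of_le_of_sum_eq (le_of_le_at_lcut_max hmono hinj hile hjle hj hpmax hp hpj) hsum
  · exact (eq_of_le_of_sum_eq (le_of_le_at_rcut_min hmono hinj hjle hj hqmin hq hqj)
      hsum.symm).symm
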